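/- arXiv:2411.02895 — 8 statements merged into one kernel-verified Lean document; each statement's English description precedes it below -/
import Mathlib

section
/- Let A, B ∈ ℂ^{n×n} be a singular pencil (det(A - λ·B) = 0 for all λ ∈ ℂ) of normal rank k := nrank(A,B). Then there exist matrices U, V ∈ ℂ^{n×(n-k)} such that for every λ0 ∈ ℂ the following equivalence holds: rank(A - λ0·B) < k if and only if there exist nonzero vectors x, y ∈ ℂⁿ with (A - λ0·B)x = 0, Uᴴx = 0, yᴴ(A - λ0·B) = 0, and Vᴴy = 0. -/
/-!
Pick `μ` with `rank (A - μ B) = k` and let `Uᴴ : ℂⁿ → ℂ^(n-k)` be injective on the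
`(n - k)`-dimensional kernel of `M = A - μ B`. The pencil `Mᴴ (A - λ B) + U Uᴴ` is invertible at
`λ = μ`, where it is the Gram matrix `Mᴴ M + U Uᴴ` with kernel `ker M ∩ ker Uᴴ = 0`; hence it is
singular for only finitely many `λ`, and only at those can `(A - λ B) x = 0, Uᴴ x = 0` have a
nonzero solution. Among them, the `λ` with `rank (A - λ B) = k` have left kernels of dimension
`n - k`, and over an infinite field some `Vᴴ : ℂⁿ → ℂ^(n-k)` is injective on all of these finitely
many subspaces. Conversely, if `rank (A - λ B) < k`, both kernels of `A - λ B` have dimension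
`> n - k`, so they meet `ker Uᴴ` and `ker Vᴴ` nontrivially.
-/

open Matrix Module Submodule

namespace Submodule

variable {K V : Type*} [Field K] [AddCommGroup V] [Module K V]

theorem disjoint_sup_span_singleton {S W : Submodule K V} {v : V} (hSW : Disjoint S W)
    (hv : v ∉ S ⊔ W) : Disjoint (S ⊔ K ∙ v) W := by
  refine (hSW.symm.disjoint_sup_right_of_disjoint_sup_left ?_).symm
  exact disjoint_span_singleton.2 fun h => absurd (sup_comm W S ▸ h) hv

variable [Infinite K] [FiniteDimensional K V]

theorem exists_finrank_eq_forall_disjoint {ι : Type*} [Finite ι] (W : ι → Submodule K V) {d : ℕ}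
    (hd : d ≤ finrank K V) (hW : ∀ i, finrank K (W i) + d ≤ finrank K V) :
    ∃ S : Submodule K V, finrank K S = d ∧ ∀ i, Disjoint S (W i) := by
  induction d with
  | zero => exact ⟨⊥, finrank_bot K V, fun _ => disjoint_bot_left⟩
  | succ d ih =>
    obtain ⟨S, hS, hSW⟩ := ih (by omega) (fun i => by have := hW i; omega)
    let W' : Option ι → Submodule K V := (Option.elim · ⊥ W)
    have hW' : ∀ o, finrank K (W' o) + d < finrank K V := by
      rintro (_ | i)
      · change finrank K (⊥ : Submodule K V) + d < _
        rw [finrank_bot]; omega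
      · change finrank K (W i) + d < _
        have := hW i; omega
    have hP : ∀ o, S ⊔ W' o ≠ ⊤ := by
      intro o htop
      have hle := finrank_add_le_finrank_add_finrank S (W' o)
      rw [htop, finrank_top] at hle
      have := hW' o
      omega
    obtain ⟨v, hv⟩ : ∃ v, ∀ o, v ∉ S ⊔ W' o := by
      by_contra! hcover
      obtain ⟨o, ho⟩ := Subspace.exists_eq_top_of_iUnion_eq_univ (Set.iUnion_eq_univ_iff.2 hcover)
      exact hP o ho
    have hvS : v ∉ S := by simpa [W'] using hv none
    exact ⟨S ⊔ K ∙ v, by rw [finrank_sup_span_singleton hvS, hS],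
      fun i => disjoint_sup_span_singleton (hSW i) (hv (some i))⟩

end Submodule

namespace Matrix

variable {K m n l p : Type*} [Field K] [Fintype n]

theorem exists_forall_disjoint_ker_mulVecLin {ι : Type*} [Infinite K] [Finite ι]
    (W : ι → Submodule K (n → K)) {d : ℕ} (hd : d ≤ Fintype.card n)
    (hW : ∀ i, finrank K (W i) ≤ d) :
    ∃ C : Matrix (Fin d) n K, ∀ i, Disjoint (LinearMap.ker C.mulVecLin) (W i) := by
  classical
  obtain ⟨S, hS, hSW⟩ := exists_finrank_eq_forall_disjoint W (d := Fintype.card n - d)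
    (by simp) (fun i => by have := hW i; simp; omega)
  have hq : finrank K ((n → K) ⧸ S) = finrank K (Fin d → K) := by
    have := S.finrank_quotient_add_finrank
    simp only [hS, Module.finrank_fintype_fun_eq_card, Fintype.card_fin] at this ⊢
    omega
  obtain ⟨e⟩ := FiniteDimensional.nonempty_linearEquiv_of_finrank_eq hq
  refine ⟨LinearMap.toMatrix' (e.toLinearMap ∘ₗ S.mkQ), fun i => ?_⟩
  rw [← toLin'_apply', toLin'_toMatrix', LinearEquiv.ker_comp, ker_mkQ]
  exact hSW i

theorem rank_add_finrank_ker_mulVecLin (C : Matrix m n K) :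
    C.rank + finrank K (LinearMap.ker C.mulVecLin) = Fintype.card n := by
  rw [rank, LinearMap.finrank_range_add_finrank_ker, Module.finrank_fintype_fun_eq_card]

theorem exists_mulVec_eq_zero_of_rank_add_card_lt [Fintype l] (C : Matrix m n K)
    (L : Matrix l n K) (h : C.rank + Fintype.card l < Fintype.card n) :
    ∃ x ≠ 0, C *ᵥ x = 0 ∧ L *ᵥ x = 0 := by
  have hker : LinearMap.ker (L.mulVecLin.domRestrict (LinearMap.ker C.mulVecLin)) ≠ ⊥ :=
    LinearMap.ker_ne_bot_of_finrank_lt (by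
      have := rank_add_finrank_ker_mulVecLin C
      rw [Module.finrank_fintype_fun_eq_card]; omega)
  obtain ⟨⟨x, hCx⟩, hLx, hx0⟩ := Submodule.exists_mem_ne_zero_of_ne_bot hker
  exact ⟨x, fun h => hx0 (Subtype.ext h), hCx, hLx⟩

theorem conjTranspose_mul_self_add_mulVec_eq_zero {R : Type*} [CommRing R] [PartialOrder R]
    [StarRing R] [StarOrderedRing R] [NoZeroDivisors R] [Fintype m] [Fintype p]
    (M : Matrix m n R) (N : Matrix p n R) (x : n → R) :
    (Mᴴ * M + Nᴴ * N) *ᵥ x = 0 ↔ M *ᵥ x = 0 ∧ N *ᵥ x = 0 := by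
  rw [← fromCols_mul_fromRows, ← conjTranspose_fromRows_eq_fromCols_conjTranspose,
    conjTranspose_mul_self_mulVec_eq_zero, fromRows_mulVec, ← Sum.elim_zero_zero, Sum.elim_eq_iff]

theorem finite_setOf_det_sub_smul_eq_zero {R : Type*} [CommRing R] [IsDomain R] [DecidableEq n]
    (X Y : Matrix n n R) {μ : R} (hμ : (X - μ • Y).det ≠ 0) :
    {l : R | (X - l • Y).det = 0}.Finite := by
  let P : Polynomial R :=
    (X.map Polynomial.C - (Polynomial.X : Polynomial R) • Y.map Polynomial.C).det
  have hP : ∀ l, P.eval l = (X - l • Y).det := by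
    intro l
    rw [← Polynomial.coe_evalRingHom, RingHom.map_det]
    congr 1
    ext i j
    simp only [RingHom.mapMatrix_apply, map_apply, sub_apply, smul_apply, smul_eq_mul,
      Polynomial.coe_evalRingHom, Polynomial.eval_sub, Polynomial.eval_mul, Polynomial.eval_C,
      Polynomial.eval_X]
  have hP0 : P ≠ 0 := fun h => hμ (by rw [← hP, h, Polynomial.eval_zero])
  exact (Polynomial.finite_setOfPred_isRoot hP0).subset fun l hl => by simpa [hP] using hl

theorem finite_setOf_exists_mulVec_eq_zero {R : Type*} [CommRing R] [IsDomain R] [PartialOrder R]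
    [StarRing R] [StarOrderedRing R] [Fintype p] (A B : Matrix n n R) (U : Matrix p n R) {μ : R}
    (hμ : Disjoint (LinearMap.ker (A - μ • B).mulVecLin) (LinearMap.ker U.mulVecLin)) :
    {l : R | ∃ x ≠ 0, (A - l • B) *ᵥ x = 0 ∧ U *ᵥ x = 0}.Finite := by
  classical
  set M := A - μ • B
  have hpencil : ∀ l : R, (Mᴴ * A + Uᴴ * U) - l • (Mᴴ * B) = Mᴴ * (A - l • B) + Uᴴ * U :=
    fun l => by rw [Matrix.mul_sub, Matrix.mul_smul]; abel
  have hdet : ((Mᴴ * A + Uᴴ * U) - μ • (Mᴴ * B)).det ≠ 0 := by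
    rw [hpencil, Ne, ← exists_mulVec_eq_zero_iff]
    rintro ⟨x, hx0, hx⟩
    obtain ⟨hMx, hUx⟩ := (conjTranspose_mul_self_add_mulVec_eq_zero M U x).1 hx
    exact hx0 (Submodule.disjoint_def.1 hμ x hMx hUx)
  refine (finite_setOf_det_sub_smul_eq_zero _ _ hdet).subset ?_
  rintro l ⟨x, hx0, hx, hUx⟩
  rw [Set.mem_ofPred_eq, hpencil, ← exists_mulVec_eq_zero_iff]
  exact ⟨x, hx0, by simp [add_mulVec, ← mulVec_mulVec, hx, hUx]⟩

theorem star_vecMul_eq_zero_iff {R : Type*} [NonUnitalSemiring R] [StarRing R] (C : Matrix n m R)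
    (y : n → R) :
    star y ᵥ* C = 0 ↔ Cᴴ *ᵥ y = 0 := by
  rw [mulVec_conjTranspose, star_eq_zero]

end Matrix

open scoped ComplexOrder

theorem exists_border_detecting_eigenvalues_general {n : ℕ}
    (A B : Matrix (Fin n) (Fin n) ℂ)
    (k : ℕ)
    (hk_le : ∀ μ : ℂ, (A - μ • B).rank ≤ k)
    (hk_attained : ∃ μ : ℂ, (A - μ • B).rank = k) :
    ∃ U V : Matrix (Fin n) (Fin (n - k)) ℂ,
      ∀ l0 : ℂ,
        (A - l0 • B).rank < k ↔
          ∃ x y : Fin n → ℂ, x ≠ 0 ∧ y ≠ 0 ∧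
            (A - l0 • B) *ᵥ x = 0 ∧ Uᴴ *ᵥ x = 0 ∧
            (star y) ᵥ* (A - l0 • B) = 0 ∧ Vᴴ *ᵥ y = 0 := by
  obtain ⟨μ, hμ⟩ := hk_attained
  have hkn : k ≤ n := hμ ▸ rank_le_width _
  have hnull (C : Matrix (Fin n) (Fin n) ℂ) :
      C.rank + finrank ℂ (LinearMap.ker C.mulVecLin) = n := by
    simpa using rank_add_finrank_ker_mulVecLin C
  obtain ⟨Uh, hUh⟩ := exists_forall_disjoint_ker_mulVecLin
    (fun _ : Unit => LinearMap.ker (A - μ • B).mulVecLin) (d := n - k) (by simp)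
    (fun _ => by have := hnull (A - μ • B); omega)
  let T := {l : ℂ | (∃ x ≠ 0, (A - l • B) *ᵥ x = 0 ∧ Uh *ᵥ x = 0) ∧ (A - l • B).rank = k}
  have : Finite T := ((finite_setOf_exists_mulVec_eq_zero A B Uh (hUh ()).symm).subset
    fun _ hl => hl.1).to_subtype
  obtain ⟨Vh, hVh⟩ := exists_forall_disjoint_ker_mulVecLin
    (fun l : T => LinearMap.ker (A - (l : ℂ) • B)ᴴ.mulVecLin) (d := n - k) (by simp)
    (fun l => by have := hnull (A - (l : ℂ) • B)ᴴ; rw [rank_conjTranspose, l.2.2] at this; omega)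
  refine ⟨Uhᴴ, Vhᴴ, fun l => ⟨fun hlt => ?_, ?_⟩⟩
  · obtain ⟨x, hx0, hx, hUx⟩ := exists_mulVec_eq_zero_of_rank_add_card_lt (A - l • B) Uh
      (by rw [Fintype.card_fin, Fintype.card_fin]; omega)
    obtain ⟨y, hy0, hy, hVy⟩ := exists_mulVec_eq_zero_of_rank_add_card_lt (A - l • B)ᴴ Vh
      (by rw [rank_conjTranspose, Fintype.card_fin, Fintype.card_fin]; omega)
    refine ⟨x, y, hx0, hy0, hx, ?_, (star_vecMul_eq_zero_iff _ y).2 hy, ?_⟩ <;> simpa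
  · rintro ⟨x, y, hx0, hy0, hx, hUx, hy, hVy⟩
    rw [conjTranspose_conjTranspose] at hUx hVy
    by_contra hge
    have hlT : l ∈ T := ⟨⟨x, hx0, hx, hUx⟩, le_antisymm (hk_le l) (not_lt.1 hge)⟩
    exact hy0 (Submodule.disjoint_def.1 (hVh ⟨l, hlT⟩) y hVy ((star_vecMul_eq_zero_iff _ y).1 hy))

/-- Let `A - λB` be a singular pencil (`det(A - λB) ≡ 0`) of normal rank `k`.
Then there exist `U, V ∈ ℂ^{n×(n-k)}` such that for every `λ0 ∈ ℂ`:
`rank(A - λ0 B) < k` iff there exist nonzero `x, y ∈ ℂⁿ` with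
`(A - λ0 B) x = 0`, `Uᴴ x = 0`, `yᴴ (A - λ0 B) = 0`, and `Vᴴ y = 0`. -/
theorem exists_border_detecting_eigenvalues {n : ℕ}
    (A B : Matrix (Fin n) (Fin n) ℂ)
    (hsing : ∀ l : ℂ, (A - l • B).det = 0)
    (k : ℕ)
    (hk_le : ∀ μ : ℂ, (A - μ • B).rank ≤ k)
    (hk_attained : ∃ μ : ℂ, (A - μ • B).rank = k) :
    ∃ U V : Matrix (Fin n) (Fin (n - k)) ℂ,
      ∀ l0 : ℂ,
        (A - l0 • B).rank < k ↔
          ∃ x y : Fin n → ℂ, x ≠ 0 ∧ y ≠ 0 ∧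
            (A - l0 • B) *ᵥ x = 0 ∧ Uᴴ *ᵥ x = 0 ∧
            (star y) ᵥ* (A - l0 • B) = 0 ∧ Vᴴ *ᵥ y = 0 :=
  exists_border_detecting_eigenvalues_general A B k hk_le hk_attained
end

section
/- Let A ∈ ℂ^{n×n} with rank(A) = n - m for some 0 ≤ m ≤ n. Then there exist matrices V, W ∈ ℂ^{n×m} such that the bordered matrix Â = [[A, W],[Vᴴ, 0]] ∈ ℂ^{(n+m)×(n+m)} is invertible. -/
/-!
Take `W` injective with range meeting `range A` only in `0`, and `Vᴴ` injective on `ker A`;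
both exist because `dim ker A = m = codim range A`. If `Â (x, y) = 0`, then `A x = -W y` lies in
both ranges, so it vanishes; hence `y = 0`, and `x ∈ ker A ∩ ker Vᴴ = 0`.
-/

open Matrix Module LinearMap

theorem Submodule.exists_injective_linearMap_disjoint_range {K V W : Type*} [DivisionRing K]
    [AddCommGroup V] [Module K V] [FiniteDimensional K V]
    [AddCommGroup W] [Module K W] [FiniteDimensional K W]
    (S : Submodule K V) (h : finrank K W + finrank K S ≤ finrank K V) :
    ∃ w : W →ₗ[K] V, Function.Injective w ∧ Disjoint S (range w) := by
  obtain ⟨C, hSC⟩ := S.exists_isCompl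
  have hC : finrank K W ≤ finrank K C := by
    have := Submodule.finrank_add_eq_of_isCompl hSC
    omega
  obtain ⟨g, hg⟩ := finrank_le_iff_exists_linearMap.mp hC
  refine ⟨C.subtype ∘ₗ g, C.injective_subtype.comp hg, hSC.disjoint.mono_right ?_⟩
  exact (range_comp_le_range g C.subtype).trans C.range_subtype.le

theorem Submodule.exists_linearMap_disjoint_ker {K V W : Type*} [DivisionRing K]
    [AddCommGroup V] [Module K V] [FiniteDimensional K V]
    [AddCommGroup W] [Module K W] [FiniteDimensional K W]
    (S : Submodule K V) (h : finrank K S ≤ finrank K W) :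
    ∃ v : V →ₗ[K] W, Disjoint S (ker v) := by
  obtain ⟨C, hSC⟩ := S.exists_isCompl
  obtain ⟨g, hg⟩ := finrank_le_iff_exists_linearMap.mp h
  refine ⟨g ∘ₗ S.projectionOnto C hSC, ?_⟩
  rw [ker_comp_of_ker_eq_bot _ (ker_eq_bot.mpr hg), Submodule.ker_projectionOnto]
  exact hSC.disjoint

theorem Matrix.ker_mulVecLin_fromBlocks_zero₂₂_eq_bot {l m n o R : Type*} [Fintype m] [Fintype n]
    [CommRing R] {A : Matrix l m R} {W : Matrix l n R} {V : Matrix o m R}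
    (hW : ker W.mulVecLin = ⊥)
    (hAW : Disjoint (range A.mulVecLin) (range W.mulVecLin))
    (hAV : Disjoint (ker A.mulVecLin) (ker V.mulVecLin)) :
    ker (fromBlocks A W V 0).mulVecLin = ⊥ := by
  rw [ker_mulVecLin_eq_bot_iff]
  intro z hz
  rw [fromBlocks_mulVec, zero_mulVec, add_zero] at hz
  set x := z ∘ Sum.inl
  set y := z ∘ Sum.inr
  have hAxWy : A *ᵥ x + W *ᵥ y = 0 := congrArg (· ∘ Sum.inl) hz
  have hVx : V *ᵥ x = 0 := congrArg (· ∘ Sum.inr) hz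
  have hAx : A *ᵥ x = 0 := by
    refine Submodule.disjoint_def.mp hAW _ ⟨x, rfl⟩ ⟨-y, ?_⟩
    simp [mulVec_neg, eq_neg_of_add_eq_zero_left hAxWy]
  have hy : y = 0 := by
    rw [hAx, zero_add] at hAxWy
    exact (ker_mulVecLin_eq_bot_iff.mp hW) y hAxWy
  have hx : x = 0 := Submodule.disjoint_def.mp hAV x hAx hVx
  ext (i | i)
  · exact congrFun hx i
  · exact congrFun hy i

/-- Let `A ∈ ℂ^{n×n}` with `rank A = n - m` for some `0 ≤ m ≤ n`. Then there
exist `V, W ∈ ℂ^{n×m}` such that the bordered matrix `Â = [[A, W],[Vᴴ, 0]]` is invertible. -/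
theorem exists_invertible_bordering {n m : ℕ} (hm : m ≤ n)
    (A : Matrix (Fin n) (Fin n) ℂ) (hrank : A.rank = n - m) :
    ∃ V W : Matrix (Fin n) (Fin m) ℂ,
      IsUnit (Matrix.fromBlocks A W Vᴴ (0 : Matrix (Fin m) (Fin m) ℂ)) := by
  have hrange : finrank ℂ (range A.mulVecLin) = n - m := hrank
  have hker : finrank ℂ (ker A.mulVecLin) = m := by
    have := finrank_range_add_finrank_ker A.mulVecLin
    rw [hrange, finrank_fin_fun] at this
    omega
  obtain ⟨v, hAv⟩ := (ker A.mulVecLin).exists_linearMap_disjoint_ker (W := Fin m → ℂ)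
    (by rw [hker, finrank_fin_fun])
  obtain ⟨w, hw, hAw⟩ := (range A.mulVecLin).exists_injective_linearMap_disjoint_range
    (W := Fin m → ℂ) (by rw [hrange, finrank_fin_fun, finrank_fin_fun]; omega)
  refine ⟨(toMatrix' v)ᴴ, toMatrix' w, ?_⟩
  rw [conjTranspose_conjTranspose, ← mulVec_injective_iff_isUnit, ← coe_mulVecLin, ← ker_eq_bot]
  apply ker_mulVecLin_fromBlocks_zero₂₂_eq_bot <;>
    simpa only [← toLin'_apply', toLin'_toMatrix', ker_eq_bot]
end

section
/- Let M, N ∈ ℂ^{N×N}. Then the polynomial p(λ) := det(M - λ·N) ∈ ℂ[λ] has degree at most rank(N). -/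
/-!
Since the determinant is multilinear in the rows,
`det (M - λ N) = ∑ₛ (-λ) ^ |s| * det Bₛ`, where `Bₛ` takes its rows in `s` from `N` and the
others from `M`. When `|s| > rank N` the rows of `Bₛ` indexed by `s` are linearly dependent,
so `det Bₛ = 0`; every surviving term has degree at most `rank N`.
-/

open Matrix Polynomial

namespace Matrix

variable {n R K : Type*} [Fintype n] [DecidableEq n]

theorem det_add_eq_sum_det_piecewise [CommRing R] (A B : Matrix n n R) :
    (A + B).det = ∑ s : Finset n, (of (s.piecewise A B)).det :=
  detRowAlternating.map_add_univ A B

theorem det_add_smul_eq_sum_pow_mul_det_piecewise [CommRing R] (A B : Matrix n n R) (t : R) :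
    (A + t • B).det = ∑ s : Finset n, t ^ s.card * (of (s.piecewise B A)).det := by
  rw [add_comm, det_add_eq_sum_det_piecewise]
  refine Finset.sum_congr rfl fun s _ => ?_
  have hrows : of (s.piecewise (t • B) A) =
      of fun i j => (if i ∈ s then t else 1) * of (s.piecewise B A) i j := by
    ext i j
    by_cases hi : i ∈ s <;> simp [Finset.piecewise, hi]
  rw [hrows, det_mul_column, Finset.prod_ite_mem, Finset.univ_inter, Finset.prod_const]

theorem det_of_piecewise_eq_zero_of_rank_lt [Field K] {A B : Matrix n n K} {s : Finset n}
    (hs : B.rank < s.card) : (of (s.piecewise B A)).det = 0 := by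
  by_contra hdet
  have hrows : LinearIndependent K (B.submatrix ((↑) : s → n) id).row := by
    have hsub : (B.submatrix ((↑) : s → n) id).row = (of (s.piecewise B A)).row ∘ (↑) := by
      ext i j
      simp [Finset.piecewise]
    rw [hsub]
    exact (linearIndependent_rows_of_det_ne_zero hdet).comp _ Subtype.val_injective
  have hrank := B.rank_submatrix_le ((↑) : s → n) id
  rw [hrows.rank_matrix, Fintype.card_coe] at hrank
  omega

end Matrix

/-- Let `M, N ∈ ℂ^{N×N}`. Then the polynomial `p(λ) := det(M - λ N)` has
degree at most `rank N`. -/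
theorem degree_det_pencil_le_rank {N : ℕ}
    (M N' : Matrix (Fin N) (Fin N) ℂ) :
    (M.map Polynomial.C - (Polynomial.X : Polynomial ℂ) • N'.map Polynomial.C).det.degree ≤
      (N'.rank : WithBot ℕ) := by
  rw [sub_eq_add_neg, ← neg_smul, det_add_smul_eq_sum_pow_mul_det_piecewise]
  refine (degree_sum_le _ _).trans (Finset.sup_le fun s _ => ?_)
  have hmap : of (s.piecewise (N'.map C) (M.map C)) = C.mapMatrix (of (s.piecewise N' M)) := by
    ext i j : 1
    by_cases hi : i ∈ s <;> simp [Finset.piecewise, hi]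
  rw [hmap, ← RingHom.map_det]
  rcases le_or_gt s.card N'.rank with hle | hlt
  · exact (show _ ≤ (s.card : WithBot ℕ) by compute_degree!).trans (by exact_mod_cast hle)
  · simp [det_of_piecewise_eq_zero_of_rank_lt hlt]
end

section
/- Let A, B ∈ ℂ^{n×n} and V, W ∈ ℂ^{n×m}, let Â = [[A, W],[Vᴴ, 0]] be invertible and B̂ = [[B, 0],[0, 0]] ∈ ℂ^{(n+m)×(n+m)}. Then rank(B̂) = rank(B), the polynomial λ ↦ det(Â - λ·B̂) is nonzero of degree d ≤ rank(B), and consequently the algebraic multiplicity of the eigenvalue at infinity of the bordered pencil, defined as (n+m) - d, is at least n + m - rank(B); in particular it is at least 2m whenever rank(B) ≤ n - m. -/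
/-!
Since `Â` is invertible, `det (Â - λ B̂) = det Â · det (1 - λ Â⁻¹ B̂)`, whose constant term
`det Â` is nonzero. Factoring `B̂ = P Q` through `Fin (rank B̂)`, Sylvester's identity
`det (1 - λ Â⁻¹ P Q) = det (1 - λ Q Â⁻¹ P)` turns the second factor into a determinant of size
`rank B̂ = rank B`, so its degree is at most `rank B`. Invertibility of `Â` also makes `W`
injective, so `m ≤ n`, which is what the bound `2 m ≤ n + m - d` needs.
-/

open Matrix Polynomial

namespace Matrix

variable {K : Type*} [Field K]

theorem exists_eq_mul_of_rank {m n : Type*} [Fintype m] [Fintype n] (M : Matrix m n K) :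
    ∃ (P : Matrix m (Fin M.rank) K) (Q : Matrix (Fin M.rank) n K), M = P * Q := by
  classical
  let b := Module.finBasisOfFinrankEq K (LinearMap.range M.mulVecLin) rfl
  have h := LinearMap.toMatrix_comp (Pi.basisFun K n) b (Pi.basisFun K m)
    (LinearMap.range M.mulVecLin).subtype M.mulVecLin.rangeRestrict
  rw [LinearMap.subtype_comp_codRestrict] at h
  exact ⟨_, _, (LinearMap.toMatrix'_toLin' M).symm.trans h⟩

theorem rank_fromBlocks_zero₁₂_zero₂₁_zero₂₂ {m n m' n' : Type*} [Fintype m] [Fintype n]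
    [Fintype n'] (B : Matrix m n K) :
    (fromBlocks B 0 0 0 : Matrix (m ⊕ m') (n ⊕ n') K).rank = B.rank := by
  refine le_antisymm ?_
    ((fromBlocks B 0 0 0 : Matrix (m ⊕ m') (n ⊕ n') K).rank_submatrix_le Sum.inl Sum.inl)
  obtain ⟨P, Q, hPQ⟩ := B.exists_eq_mul_of_rank
  calc (fromBlocks B 0 0 0 : Matrix (m ⊕ m') (n ⊕ n') K).rank
      = (fromRows P (0 : Matrix m' _ K) * fromCols Q (0 : Matrix _ n' K)).rank := by
        rw [fromRows_mul_fromCols, ← hPQ, Matrix.mul_zero, Matrix.zero_mul, Matrix.zero_mul]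
    _ ≤ B.rank :=
        (rank_mul_le_left _ _).trans ((rank_le_card_width _).trans (Fintype.card_fin _).le)

theorem card_le_of_isUnit_fromBlocks_zero₂₂ {n m : Type*} [Fintype n] [Fintype m]
    [DecidableEq n] [DecidableEq m] {A : Matrix n n K} {W : Matrix n m K} {V : Matrix m n K}
    (h : IsUnit (fromBlocks A W V 0)) : Fintype.card m ≤ Fintype.card n := by
  have hcols : (fromBlocks A W V 0 : Matrix (n ⊕ m) (n ⊕ m) K) *
      fromRows (0 : Matrix n m K) (1 : Matrix m m K) =
      fromRows (1 : Matrix n n K) (0 : Matrix m n K) * W := by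
    rw [fromBlocks_mul_fromRows, fromRows_mul]; simp
  calc Fintype.card m = (1 : Matrix m m K).rank := rank_one.symm
    _ ≤ (fromRows (0 : Matrix n m K) (1 : Matrix m m K)).rank :=
        (fromRows (0 : Matrix n m K) (1 : Matrix m m K)).rank_submatrix_le Sum.inr id
    _ = (fromRows (1 : Matrix n n K) (0 : Matrix m n K) * W).rank := by
        rw [← hcols, rank_mul_eq_right_of_isUnit_det _ _ ((isUnit_iff_isUnit_det _).mp h)]
    _ ≤ W.rank := rank_mul_le_right _ _
    _ ≤ Fintype.card n := rank_le_card_height W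

variable {ι : Type*} [Fintype ι] [DecidableEq ι]

theorem det_map_C_sub_X_smul_ne_zero {R : Type*} [CommRing R] {A : Matrix ι ι R}
    (hA : A.det ≠ 0) (B : Matrix ι ι R) :
    (A.map C - (X : R[X]) • B.map C).det ≠ 0 := by
  have hpencil : A.map (C : R →+* R[X]) - (X : R[X]) • B.map (C : R →+* R[X]) =
      (X : R[X]) • (-B).map (C : R →+* R[X]) + A.map (C : R →+* R[X]) := by
    rw [sub_eq_neg_add, Matrix.map_neg _ (map_neg (C : R →+* R[X])), smul_neg]
  intro h
  apply hA
  rw [← coeff_det_X_add_C_zero (-B) A, ← hpencil, h, coeff_zero]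

theorem natDegree_det_one_sub_X_smul_map_C_mul_le {R κ : Type*} [CommRing R] [Fintype κ]
    [DecidableEq κ] (P : Matrix ι κ R) (Q : Matrix κ ι R) :
    (1 - (X : R[X]) • (P * Q).map C).det.natDegree ≤ Fintype.card κ := by
  have hsylvester : (1 - (X : R[X]) • (P * Q).map (C : R →+* R[X])).det =
      ((X : R[X]) • (-(Q * P)).map (C : R →+* R[X]) + (1 : Matrix κ κ R).map C).det := by
    rw [Matrix.map_mul, ← Matrix.smul_mul, det_one_sub_mul_comm, Matrix.mul_smul,
      ← Matrix.map_mul, Matrix.map_one _ (map_zero _) (map_one _), Matrix.map_neg _ (map_neg _),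
      smul_neg, neg_add_eq_sub]
  exact hsylvester ▸ natDegree_det_X_add_C_le (-(Q * P)) 1

theorem natDegree_det_one_sub_X_smul_map_C_le_rank (M : Matrix ι ι K) :
    (1 - (X : K[X]) • M.map C).det.natDegree ≤ M.rank := by
  obtain ⟨P, Q, hPQ⟩ := M.exists_eq_mul_of_rank
  simpa only [← hPQ, Fintype.card_fin] using natDegree_det_one_sub_X_smul_map_C_mul_le P Q

theorem natDegree_det_map_C_sub_X_smul_le_rank {A : Matrix ι ι K} (hA : IsUnit A.det)
    (B : Matrix ι ι K) :
    (A.map C - (X : K[X]) • B.map C).det.natDegree ≤ B.rank := by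
  have hfactor : A.map (C : K →+* K[X]) - (X : K[X]) • B.map (C : K →+* K[X]) =
      A.map (C : K →+* K[X]) * (1 - (X : K[X]) • (A⁻¹ * B).map (C : K →+* K[X])) := by
    rw [Matrix.mul_sub, Matrix.mul_one, Matrix.mul_smul, ← Matrix.map_mul, ← Matrix.mul_assoc,
      mul_nonsing_inv A hA, Matrix.one_mul]
  calc (A.map (C : K →+* K[X]) - (X : K[X]) • B.map (C : K →+* K[X])).det.natDegree
      = (1 - (X : K[X]) • (A⁻¹ * B).map (C : K →+* K[X])).det.natDegree := by
        rw [hfactor, det_mul, ← RingHom.mapMatrix_apply, ← RingHom.map_det, natDegree_C_mul]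
        exact hA.ne_zero
    _ ≤ (A⁻¹ * B).rank := natDegree_det_one_sub_X_smul_map_C_le_rank _
    _ ≤ B.rank := rank_mul_le_right _ _

end Matrix

/-- Let `Â = [[A, W],[Vᴴ, 0]]` be invertible and `B̂ = [[B, 0],[0, 0]]`.
Then `rank B̂ = rank B`, the polynomial `λ ↦ det(Â - λ B̂)` is nonzero of degree
`d ≤ rank B`, hence the algebraic multiplicity `(n+m) - d` of the eigenvalue at infinity of
the bordered pencil is at least `n + m - rank B`; in particular at least `2m` whenever
`rank B ≤ n - m`. -/
theorem bordered_pencil_infinity_multiplicity {n m : ℕ}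
    (A B : Matrix (Fin n) (Fin n) ℂ) (V W : Matrix (Fin n) (Fin m) ℂ)
    (hinv : IsUnit (Matrix.fromBlocks A W Vᴴ (0 : Matrix (Fin m) (Fin m) ℂ))) :
    (Matrix.fromBlocks B (0 : Matrix (Fin n) (Fin m) ℂ)
        (0 : Matrix (Fin m) (Fin n) ℂ) (0 : Matrix (Fin m) (Fin m) ℂ)).rank = B.rank ∧
    ∀ p : Polynomial ℂ,
      p = ((Matrix.fromBlocks A W Vᴴ (0 : Matrix (Fin m) (Fin m) ℂ)).map Polynomial.C -
            (Polynomial.X : Polynomial ℂ) •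
              (Matrix.fromBlocks B (0 : Matrix (Fin n) (Fin m) ℂ)
                (0 : Matrix (Fin m) (Fin n) ℂ) (0 : Matrix (Fin m) (Fin m) ℂ)).map
                  Polynomial.C).det →
        p ≠ 0 ∧ p.natDegree ≤ B.rank ∧
        n + m - B.rank ≤ (n + m) - p.natDegree ∧
        (B.rank ≤ n - m → 2 * m ≤ (n + m) - p.natDegree) := by
  have hdet : IsUnit (fromBlocks A W Vᴴ (0 : Matrix (Fin m) (Fin m) ℂ)).det :=
    (isUnit_iff_isUnit_det _).mp hinv
  have hmn : m ≤ n := by simpa using card_le_of_isUnit_fromBlocks_zero₂₂ hinv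
  have hrank := rank_fromBlocks_zero₁₂_zero₂₁_zero₂₂ (m' := Fin m) (n' := Fin m) B
  refine ⟨hrank, ?_⟩
  rintro p rfl
  have hdeg := hrank ▸ natDegree_det_map_C_sub_X_smul_le_rank hdet
    (fromBlocks B (0 : Matrix (Fin n) (Fin m) ℂ) 0 0)
  exact ⟨det_map_C_sub_X_smul_ne_zero hdet.ne_zero _, hdeg, by omega, fun _ => by omega⟩
end

section
/- Let A, B ∈ ℂ^{n×n}, V, W ∈ ℂ^{n×m}, and suppose Â = [[A, W],[Vᴴ, 0]] is invertible; let B̂ = [[B, 0],[0, 0]]. Define Ã ∈ ℂ^{n×n} to be the map sending u ∈ ℂⁿ to the first n entries of Â⁻¹·[B·u; 0] (equivalently, Ã = K·B where K is the top-left n×n block of Â⁻¹). If λ ∈ ℂ with λ ≠ 0 and x̂ = [x1; x2] ∈ ℂ^{n+m} is nonzero with Â·x̂ = λ·B̂·x̂, then x1 ≠ 0 and Ã·x1 = λ⁻¹·x1. -/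
open Matrix

/-! Applying `Â⁻¹` to `Â x̂ = λ B̂ x̂ = λ [B x1; 0]` gives `Â⁻¹ [B x1; 0] = λ⁻¹ x̂`, whose first block
is the claimed eigen-equation. If `x1` were zero the left-hand side would vanish, forcing `x̂ = 0`. -/

theorem Matrix.inv_mulVec_eq_inv_smul_of_mulVec_eq_smul {ι K : Type*} [Fintype ι] [DecidableEq ι]
    [Field K] {M : Matrix ι ι K} (hM : IsUnit M) {c : K} (hc : c ≠ 0) {v w : ι → K}
    (h : M *ᵥ v = c • w) : M⁻¹ *ᵥ w = c⁻¹ • v := by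
  have hMv : M⁻¹ *ᵥ (M *ᵥ v) = v := by
    rw [mulVec_mulVec, nonsing_inv_mul M ((isUnit_iff_isUnit_det M).mp hM), one_mulVec]
  rw [← hMv, h, mulVec_smul, smul_smul, inv_mul_cancel₀ hc, one_smul]

theorem Matrix.fromBlocks_zero_zero_zero_mulVec_sumElim {n m R : Type*} [Fintype n] [Fintype m]
    [NonUnitalNonAssocSemiring R] (B : Matrix n n R) (x : n → R) (y : m → R) :
    fromBlocks B 0 0 (0 : Matrix m m R) *ᵥ Sum.elim x y = Sum.elim (B *ᵥ x) 0 := by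
  simp [fromBlocks_mulVec]

/-- Suppose `Â = [[A, W],[Vᴴ, 0]]` is invertible, `B̂ = [[B, 0],[0, 0]]`, and
`Ã` maps `u` to the first `n` entries of `Â⁻¹ [Bu; 0]`. If `λ ≠ 0` and
`x̂ = [x1; x2] ≠ 0` with `Â x̂ = λ B̂ x̂`, then `x1 ≠ 0` and `Ã x1 = λ⁻¹ x1`. -/
theorem shift_invert_eigenvector {n m : ℕ}
    (A B : Matrix (Fin n) (Fin n) ℂ) (V W : Matrix (Fin n) (Fin m) ℂ)
    (hinv : IsUnit (Matrix.fromBlocks A W Vᴴ (0 : Matrix (Fin m) (Fin m) ℂ)))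
    (l : ℂ) (hl : l ≠ 0) (x1 : Fin n → ℂ) (x2 : Fin m → ℂ)
    (hx : Sum.elim x1 x2 ≠ 0)
    (heig : Matrix.fromBlocks A W Vᴴ (0 : Matrix (Fin m) (Fin m) ℂ) *ᵥ Sum.elim x1 x2 =
      l • (Matrix.fromBlocks B (0 : Matrix (Fin n) (Fin m) ℂ)
        (0 : Matrix (Fin m) (Fin n) ℂ) (0 : Matrix (Fin m) (Fin m) ℂ) *ᵥ Sum.elim x1 x2)) :
    x1 ≠ 0 ∧
    (fun i : Fin n =>
        ((Matrix.fromBlocks A W Vᴴ (0 : Matrix (Fin m) (Fin m) ℂ))⁻¹ *ᵥ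
          Sum.elim (B *ᵥ x1) (0 : Fin m → ℂ)) (Sum.inl i)) = l⁻¹ • x1 := by
  rw [fromBlocks_zero_zero_zero_mulVec_sumElim] at heig
  have key := inv_mulVec_eq_inv_smul_of_mulVec_eq_smul hinv hl heig
  refine ⟨?_, funext fun i => by simpa using congrFun key (Sum.inl i)⟩
  rintro rfl
  refine hx ((smul_eq_zero.mp ?_).resolve_left (inv_ne_zero hl))
  simp [← key]
end

section
/- Let A, B ∈ ℂ^{n×n}, V, W ∈ ℂ^{n×m}, and suppose Â = [[A, W],[Vᴴ, 0]] is invertible; let B̂ = [[B, 0],[0, 0]]. Define Ã ∈ ℂ^{n×n} to be the map sending u ∈ ℂⁿ to the first n entries of Â⁻¹·[B·u; 0]. If θ ∈ ℂ with θ ≠ 0 and x1 ∈ ℂⁿ is nonzero with Ã·x1 = θ·x1, then the vector x̂ := θ⁻¹·Â⁻¹·[B·x1; 0] ∈ ℂ^{n+m} satisfies Â·x̂ = θ⁻¹·B̂·x̂ and the first n entries of x̂ equal x1 (so x̂ ≠ 0); i.e., θ⁻¹ is an eigenvalue of the bordered pencil. -/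
open Matrix

namespace Matrix

theorem mulVec_nonsing_inv_mulVec {n R : Type*} [Fintype n] [DecidableEq n] [CommRing R]
    {A : Matrix n n R} (hA : IsUnit A) (b : n → R) : A *ᵥ (A⁻¹ *ᵥ b) = b := by
  rw [mulVec_mulVec, mul_nonsing_inv A ((isUnit_iff_isUnit_det A).mp hA), one_mulVec]

theorem fromBlocks_zero_zero_zero_mulVec {l n o p R : Type*} [Fintype n] [Fintype o]
    [NonUnitalNonAssocSemiring R] (B : Matrix l n R) (y : n ⊕ o → R) :
    fromBlocks B (0 : Matrix l o R) (0 : Matrix p n R) (0 : Matrix p o R) *ᵥ y =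
      Sum.elim (B *ᵥ (y ∘ Sum.inl)) 0 := by
  simp [fromBlocks_mulVec]

end Matrix

theorem shift_invert_eigenvalue_lift_general {n m : ℕ}
    (A B : Matrix (Fin n) (Fin n) ℂ) (V W : Matrix (Fin n) (Fin m) ℂ)
    (hinv : IsUnit (Matrix.fromBlocks A W Vᴴ (0 : Matrix (Fin m) (Fin m) ℂ)))
    (θ : ℂ) (hθ : θ ≠ 0) (x1 : Fin n → ℂ)
    (heig : (fun i : Fin n =>
        ((Matrix.fromBlocks A W Vᴴ (0 : Matrix (Fin m) (Fin m) ℂ))⁻¹ *ᵥ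
          Sum.elim (B *ᵥ x1) (0 : Fin m → ℂ)) (Sum.inl i)) = θ • x1) :
    Matrix.fromBlocks A W Vᴴ (0 : Matrix (Fin m) (Fin m) ℂ) *ᵥ
        (θ⁻¹ • ((Matrix.fromBlocks A W Vᴴ (0 : Matrix (Fin m) (Fin m) ℂ))⁻¹ *ᵥ
          Sum.elim (B *ᵥ x1) (0 : Fin m → ℂ))) =
      θ⁻¹ • (Matrix.fromBlocks B (0 : Matrix (Fin n) (Fin m) ℂ)
        (0 : Matrix (Fin m) (Fin n) ℂ) (0 : Matrix (Fin m) (Fin m) ℂ) *ᵥ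
          (θ⁻¹ • ((Matrix.fromBlocks A W Vᴴ (0 : Matrix (Fin m) (Fin m) ℂ))⁻¹ *ᵥ
            Sum.elim (B *ᵥ x1) (0 : Fin m → ℂ)))) ∧
    (fun i : Fin n =>
        (θ⁻¹ • ((Matrix.fromBlocks A W Vᴴ (0 : Matrix (Fin m) (Fin m) ℂ))⁻¹ *ᵥ
          Sum.elim (B *ᵥ x1) (0 : Fin m → ℂ))) (Sum.inl i)) = x1 := by
  set y := (fromBlocks A W Vᴴ (0 : Matrix (Fin m) (Fin m) ℂ))⁻¹ *ᵥ
    Sum.elim (B *ᵥ x1) (0 : Fin m → ℂ)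
  have htop : (θ⁻¹ • y) ∘ Sum.inl = x1 := by
    change θ⁻¹ • (fun i => y (Sum.inl i)) = x1
    rw [heig, inv_smul_smul₀ hθ]
  refine ⟨?_, htop⟩
  rw [mulVec_smul, mulVec_nonsing_inv_mulVec hinv, fromBlocks_zero_zero_zero_mulVec, htop]

/-- Suppose `Â = [[A, W],[Vᴴ, 0]]` is invertible, `B̂ = [[B, 0],[0, 0]]`, and
`Ã` maps `u` to the first `n` entries of `Â⁻¹ [Bu; 0]`. If `θ ≠ 0` and `x1 ≠ 0` with
`Ã x1 = θ x1`, then `x̂ := θ⁻¹ Â⁻¹ [B x1; 0]` satisfies `Â x̂ = θ⁻¹ B̂ x̂` and its first `n`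
entries equal `x1` (so `x̂ ≠ 0`); i.e., `θ⁻¹` is an eigenvalue of the bordered pencil. -/
theorem shift_invert_eigenvalue_lift {n m : ℕ}
    (A B : Matrix (Fin n) (Fin n) ℂ) (V W : Matrix (Fin n) (Fin m) ℂ)
    (hinv : IsUnit (Matrix.fromBlocks A W Vᴴ (0 : Matrix (Fin m) (Fin m) ℂ)))
    (θ : ℂ) (hθ : θ ≠ 0) (x1 : Fin n → ℂ) (hx1 : x1 ≠ 0)
    (heig : (fun i : Fin n =>
        ((Matrix.fromBlocks A W Vᴴ (0 : Matrix (Fin m) (Fin m) ℂ))⁻¹ *ᵥ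
          Sum.elim (B *ᵥ x1) (0 : Fin m → ℂ)) (Sum.inl i)) = θ • x1) :
    Matrix.fromBlocks A W Vᴴ (0 : Matrix (Fin m) (Fin m) ℂ) *ᵥ
        (θ⁻¹ • ((Matrix.fromBlocks A W Vᴴ (0 : Matrix (Fin m) (Fin m) ℂ))⁻¹ *ᵥ
          Sum.elim (B *ᵥ x1) (0 : Fin m → ℂ))) =
      θ⁻¹ • (Matrix.fromBlocks B (0 : Matrix (Fin n) (Fin m) ℂ)
        (0 : Matrix (Fin m) (Fin n) ℂ) (0 : Matrix (Fin m) (Fin m) ℂ) *ᵥ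
          (θ⁻¹ • ((Matrix.fromBlocks A W Vᴴ (0 : Matrix (Fin m) (Fin m) ℂ))⁻¹ *ᵥ
            Sum.elim (B *ᵥ x1) (0 : Fin m → ℂ)))) ∧
    (fun i : Fin n =>
        (θ⁻¹ • ((Matrix.fromBlocks A W Vᴴ (0 : Matrix (Fin m) (Fin m) ℂ))⁻¹ *ᵥ
          Sum.elim (B *ᵥ x1) (0 : Fin m → ℂ))) (Sum.inl i)) = x1 :=
  shift_invert_eigenvalue_lift_general A B V W hinv θ hθ x1 heig
end

section
/- Let A, B ∈ ℂ^{n×m} with normal rank k := nrank(A,B), and let W ∈ ℂ^{n×p}. Assume there exists μ ∈ ℂ with rank([A - μ·B, W]) = k + p (block matrix juxtaposing A - μ·B and W). Then for every λ0 ∈ ℂ with rank(A - λ0·B) < k, one has rank([A - λ0·B, W]) < max over λ ∈ ℂ of rank([A - λ·B, W]); i.e., every eigenvalue of the rectangular pencil A - λB remains an eigenvalue of the bordered rectangular pencil [A - λB, W]. -/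
open Matrix

namespace Matrix

theorem range_col_fromCols {α m n₁ n₂ : Type*} (A : Matrix m n₁ α) (W : Matrix m n₂ α) :
    Set.range (fromCols A W).col = Set.range A.col ∪ Set.range W.col := by
  ext v
  simp only [Set.mem_union, Set.mem_range, Sum.exists]
  rfl

theorem rank_fromCols_le {K m n₁ n₂ : Type*} [Field K] [Fintype n₁] [Fintype n₂]
    (A : Matrix m n₁ K) (W : Matrix m n₂ K) :
    (fromCols A W).rank ≤ A.rank + W.rank := by
  have := FiniteDimensional.span_of_finite K (Set.finite_range A.col)
  have := FiniteDimensional.span_of_finite K (Set.finite_range W.col)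
  rw [rank_eq_finrank_span_cols, rank_eq_finrank_span_cols, rank_eq_finrank_span_cols,
    range_col_fromCols, Submodule.span_union]
  exact Submodule.finrank_add_le_finrank_add_finrank _ _

end Matrix

theorem eigenvalue_preserved_by_column_border_general {n m p : ℕ}
    (A B : Matrix (Fin n) (Fin m) ℂ) (W : Matrix (Fin n) (Fin p) ℂ) (k : ℕ)
    (hfull : ∃ μ : ℂ, (Matrix.fromCols (A - μ • B) W).rank = k + p)
    (k' : ℕ)
    (hk'_le : ∀ μ : ℂ, (Matrix.fromCols (A - μ • B) W).rank ≤ k') :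
    ∀ l0 : ℂ, (A - l0 • B).rank < k →
      (Matrix.fromCols (A - l0 • B) W).rank < k' := by
  intro l0 hl0
  obtain ⟨μ, hμ⟩ := hfull
  calc (fromCols (A - l0 • B) W).rank ≤ (A - l0 • B).rank + W.rank :=
        rank_fromCols_le _ _
    _ < k + p := by have := W.rank_le_width; omega
    _ = (fromCols (A - μ • B) W).rank := hμ.symm
    _ ≤ k' := hk'_le μ

/-- Let `A, B ∈ ℂ^{n×m}` with normal rank `k` and `W ∈ ℂ^{n×p}`. If there is
`μ` with `rank([A - μB, W]) = k + p`, then every eigenvalue `λ0` of the pencil `A - λB`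
(i.e. `rank(A - λ0 B) < k`) satisfies `rank([A - λ0 B, W]) < max_λ rank([A - λB, W])`. -/
theorem eigenvalue_preserved_by_column_border {n m p : ℕ}
    (A B : Matrix (Fin n) (Fin m) ℂ) (W : Matrix (Fin n) (Fin p) ℂ) (k : ℕ)
    (hk_le : ∀ μ : ℂ, (A - μ • B).rank ≤ k)
    (hk_attained : ∃ μ : ℂ, (A - μ • B).rank = k)
    (hfull : ∃ μ : ℂ, (Matrix.fromCols (A - μ • B) W).rank = k + p)
    (k' : ℕ)
    (hk'_le : ∀ μ : ℂ, (Matrix.fromCols (A - μ • B) W).rank ≤ k')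
    (hk'_attained : ∃ μ : ℂ, (Matrix.fromCols (A - μ • B) W).rank = k') :
    ∀ l0 : ℂ, (A - l0 • B).rank < k →
      (Matrix.fromCols (A - l0 • B) W).rank < k' :=
  eigenvalue_preserved_by_column_border_general A B W k hfull k' hk'_le
end

section
/- Let A0, A1, A2 ∈ ℂ^{n×n} and form the companion linearization A = [[A1, A0],[Iₙ, 0]], B = [[-A2, 0],[0, Iₙ]] ∈ ℂ^{2n×2n}. Then for every λ ∈ ℂ, rank(A - λ·B) = n + rank(λ²·A2 + λ·A1 + A0). Consequently nrank(A,B) = n + max_{λ∈ℂ} rank(λ²A2 + λA1 + A0), and λ0 ∈ ℂ satisfies rank(A - λ0·B) < nrank(A,B) if and only if rank(λ0²A2 + λ0A1 + A0) < max_{λ∈ℂ} rank(λ²A2 + λA1 + A0). -/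
/-!
`A - λ B` is the block matrix `[[A1 + λ A2, A0], [I, -λ I]]`. Its lower-left identity block
clears the first block column and the second block row by unipotent, hence rank-preserving, block
operations; what remains is `I` together with the Schur complement `A0 + λ A1 + λ² A2`. So the
two ranks differ by the constant `n` for every `λ`, which transfers maxima and rank drops between
the two pencils.
-/

open Matrix

section

variable {K : Type*} [Field K]

theorem Submodule.finrank_prod {M N : Type*} [AddCommGroup M] [AddCommGroup N] [Module K M]
    [Module K N] [FiniteDimensional K M] [FiniteDimensional K N] (p : Submodule K M)
    (q : Submodule K N) :
    Module.finrank K (p.prod q) = Module.finrank K p + Module.finrank K q := by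
  have hinj : Function.Injective (p.subtype.prodMap q.subtype) :=
    Prod.map_injective.2 ⟨p.injective_subtype, q.injective_subtype⟩
  rw [← Module.finrank_prod, ← LinearMap.finrank_range_of_inj hinj, LinearMap.range_prodMap,
    Submodule.range_subtype, Submodule.range_subtype]

variable {l m n : Type*} [Fintype l] [Fintype m] [Fintype n]

theorem Matrix.rank_fromBlocks_zero_zero {o : Type*} [Fintype o] [DecidableEq m] [DecidableEq o]
    (A : Matrix l m K) (D : Matrix n o K) :
    (fromBlocks A 0 0 D).rank = A.rank + D.rank := by
  have hprod : toLin ((Pi.basisFun K m).prod (Pi.basisFun K o))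
      ((Pi.basisFun K l).prod (Pi.basisFun K n)) (fromBlocks A 0 0 D) =
      (toLin (Pi.basisFun K m) (Pi.basisFun K l) A).prodMap
        (toLin (Pi.basisFun K o) (Pi.basisFun K n) D) := by
    apply (LinearMap.toMatrix ((Pi.basisFun K m).prod (Pi.basisFun K o))
      ((Pi.basisFun K l).prod (Pi.basisFun K n))).injective
    rw [LinearMap.toMatrix_toLin]
    ext (i | i) (j | j) <;> simp [LinearMap.toMatrix, toLin_eq_toLin']
  rw [rank_eq_finrank_range_toLin _ ((Pi.basisFun K l).prod (Pi.basisFun K n))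
      ((Pi.basisFun K m).prod (Pi.basisFun K o)), hprod, LinearMap.range_prodMap,
    Submodule.finrank_prod, ← rank_eq_finrank_range_toLin,
    ← rank_eq_finrank_range_toLin]

variable [DecidableEq m] [DecidableEq n]

namespace Matrix

theorem rank_fromBlocks_zero_one (B : Matrix l n K) :
    (fromBlocks 0 B (1 : Matrix m m K) 0).rank = Fintype.card m + B.rank := by
  have hswap : fromBlocks 0 B (1 : Matrix m m K) 0 =
      (fromBlocks 1 0 0 B).submatrix (Equiv.sumComm l m) (Equiv.refl (m ⊕ n)) := by
    simp
  rw [hswap, rank_submatrix, rank_fromBlocks_zero_zero, rank_one]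

variable [DecidableEq l] in
theorem rank_fromBlocks_one₂₁ (A : Matrix l m K) (B : Matrix l n K) (D : Matrix m n K) :
    (fromBlocks A B 1 D).rank = Fintype.card m + (B - A * D).rank := by
  have hfactor : fromBlocks A B 1 D =
      (fromBlocks 1 A 0 1 : Matrix (l ⊕ m) (l ⊕ m) K) *
        (fromBlocks 0 (B - A * D) 1 0 : Matrix (l ⊕ m) (m ⊕ n) K) *
        (fromBlocks 1 D 0 1 : Matrix (m ⊕ n) (m ⊕ n) K) := by
    simp [fromBlocks_multiply]
  rw [hfactor, rank_mul_eq_left_of_isUnit_det, rank_mul_eq_right_of_isUnit_det,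
    rank_fromBlocks_zero_one]
  all_goals simp

end Matrix

theorem rank_companion_sub_smul (A₀ A₁ A₂ : Matrix n n K) (μ : K) :
    (fromBlocks A₁ A₀ 1 0 - μ • fromBlocks (-A₂) 0 0 1 : Matrix (n ⊕ n) (n ⊕ n) K).rank
      = Fintype.card n + (μ ^ 2 • A₂ + μ • A₁ + A₀).rank := by
  have hpencil :
      (fromBlocks A₁ A₀ 1 0 - μ • fromBlocks (-A₂) 0 0 1 : Matrix (n ⊕ n) (n ⊕ n) K) =
        fromBlocks (A₁ + μ • A₂) A₀ 1 (-μ • 1) := by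
    rw [fromBlocks_smul, sub_eq_add_neg, fromBlocks_neg, fromBlocks_add]
    congr 1 <;> simp
  rw [hpencil, rank_fromBlocks_one₂₁]
  congr 2
  simp only [Matrix.mul_smul, Matrix.mul_one]
  module

end

/-- For the companion linearization `A = [[A1, A0],[I, 0]]`,
`B = [[-A2, 0],[0, I]]` of the quadratic pencil `λ²A2 + λA1 + A0`:
`rank(A - λB) = n + rank(λ²A2 + λA1 + A0)` for every `λ`; consequently
`nrank(A,B) = n + max_λ rank(λ²A2 + λA1 + A0)`, and `λ0` is an eigenvalue of the
linearization iff it is an eigenvalue of the quadratic pencil. -/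
theorem companion_linearization_rank {n : ℕ}
    (A0 A1 A2 : Matrix (Fin n) (Fin n) ℂ)
    (k : ℕ)
    (hk_le : ∀ μ : ℂ, ((Matrix.fromBlocks A1 A0 (1 : Matrix (Fin n) (Fin n) ℂ)
        (0 : Matrix (Fin n) (Fin n) ℂ)) -
      μ • (Matrix.fromBlocks (-A2) (0 : Matrix (Fin n) (Fin n) ℂ)
        (0 : Matrix (Fin n) (Fin n) ℂ) (1 : Matrix (Fin n) (Fin n) ℂ))).rank ≤ k)
    (hk_attained : ∃ μ : ℂ, ((Matrix.fromBlocks A1 A0 (1 : Matrix (Fin n) (Fin n) ℂ)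
        (0 : Matrix (Fin n) (Fin n) ℂ)) -
      μ • (Matrix.fromBlocks (-A2) (0 : Matrix (Fin n) (Fin n) ℂ)
        (0 : Matrix (Fin n) (Fin n) ℂ) (1 : Matrix (Fin n) (Fin n) ℂ))).rank = k)
    (kq : ℕ)
    (hkq_le : ∀ μ : ℂ, (μ ^ 2 • A2 + μ • A1 + A0).rank ≤ kq)
    (hkq_attained : ∃ μ : ℂ, (μ ^ 2 • A2 + μ • A1 + A0).rank = kq) :
    (∀ l : ℂ, ((Matrix.fromBlocks A1 A0 (1 : Matrix (Fin n) (Fin n) ℂ)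
        (0 : Matrix (Fin n) (Fin n) ℂ)) -
      l • (Matrix.fromBlocks (-A2) (0 : Matrix (Fin n) (Fin n) ℂ)
        (0 : Matrix (Fin n) (Fin n) ℂ) (1 : Matrix (Fin n) (Fin n) ℂ))).rank =
        n + (l ^ 2 • A2 + l • A1 + A0).rank) ∧
    k = n + kq ∧
    (∀ l0 : ℂ, ((Matrix.fromBlocks A1 A0 (1 : Matrix (Fin n) (Fin n) ℂ)
        (0 : Matrix (Fin n) (Fin n) ℂ)) -
      l0 • (Matrix.fromBlocks (-A2) (0 : Matrix (Fin n) (Fin n) ℂ)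
        (0 : Matrix (Fin n) (Fin n) ℂ) (1 : Matrix (Fin n) (Fin n) ℂ))).rank < k ↔
        (l0 ^ 2 • A2 + l0 • A1 + A0).rank < kq) := by
  have hrank := rank_companion_sub_smul A0 A1 A2
  simp only [Fintype.card_fin] at hrank
  obtain ⟨μ, hμ⟩ := hk_attained
  obtain ⟨ν, hν⟩ := hkq_attained
  have hk : k = n + kq := by
    have hν_le := hk_le ν
    have hμ_le := hkq_le μ
    rw [hrank] at hμ hν_le
    omega
  refine ⟨hrank, hk, fun l₀ => ?_⟩
  rw [hrank, hk]
  omega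
end
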